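/- arXiv:2202.09091 — 3 statements merged into one kernel-verified Lean document; each statement's English description precedes it below -/
import Mathlib

section
/- If t, u, v are nonempty words with t ≠ v and tu = uv, then there exist words p, q with pq primitive, a positive integer m, and a nonnegative integer j such that t = (pq)^m, v = (qp)^m, and u = (pq)^j p. -/
variable {A : Type*}

/-- k-fold concatenation of a word with itself. -/
def pw (w : List A) : ℕ → List A
  | 0 => []
  | n + 1 => w ++ pw w n

/-- A nonempty word is primitive if it is not a proper power. -/
def Primitive (w : List A) : Prop :=
  w ≠ [] ∧ ∀ (v : List A) (m : ℕ), w = pw v m → m = 1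

theorem pw_add (w : List A) (a b : ℕ) : pw w (a + b) = pw w a ++ pw w b := by
  induction a with
  | zero => simp [pw]
  | succ n ih => simp [pw, Nat.succ_add, ih]

theorem pw_length (w : List A) (n : ℕ) : (pw w n).length = n * w.length := by
  induction n with
  | zero => simp [pw]
  | succ n ih => simp [pw, ih, Nat.succ_mul]; ring

theorem pw_mul (w : List A) (a b : ℕ) : pw (pw w a) b = pw w (a * b) := by
  induction b with
  | zero => simp [pw]
  | succ n ih => simp only [pw, ih, Nat.mul_succ, Nat.add_comm (a * n) a, pw_add]

theorem pw_conj (x y : List A) (m : ℕ) : pw (x ++ y) m ++ x = x ++ pw (y ++ x) m := by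
  induction m with
  | zero => simp [pw]
  | succ n ih => simp only [pw, List.append_assoc, ih]

theorem prim_root (w : List A) (hw : w ≠ []) :
    ∃ r m, Primitive r ∧ 0 < m ∧ w = pw r m := by
  by_cases hp : Primitive w
  · exact ⟨w, 1, hp, one_pos, by simp [pw]⟩
  · rw [Primitive] at hp
    push_neg at hp
    obtain ⟨x, m, hxm, hm1⟩ := hp hw
    have hm0 : m ≠ 0 := by rintro rfl; exact hw (by simpa [pw] using hxm)
    have hx : x ≠ [] := by
      rintro rfl
      apply hw
      have := pw_length ([] : List A) m
      rw [← hxm] at this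
      simpa using List.eq_nil_of_length_eq_zero (by simpa using this)
    have hlen : x.length < w.length := by
      have h2 : 2 ≤ m := by omega
      have hx1 : 1 ≤ x.length := List.length_pos_iff.mpr hx
      have : w.length = m * x.length := by rw [hxm, pw_length]
      calc x.length < 2 * x.length := by omega
        _ ≤ m * x.length := Nat.mul_le_mul_right _ h2
        _ = w.length := this.symm
    obtain ⟨r, k, hr, hk, hrk⟩ := prim_root x hx
    exact ⟨r, k * m, hr, by positivity, by rw [hxm, hrk, pw_mul]⟩
termination_by w.length

theorem conj_lemma (t u v : List A) (ht : t ≠ []) (h : t ++ u = u ++ v) :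
    ∃ p q j, t = p ++ q ∧ v = q ++ p ∧ u = pw (p ++ q) j ++ p := by
  by_cases hle : u.length ≤ t.length
  · have hu : u <+: t :=
      List.prefix_of_prefix_length_le (h ▸ List.prefix_append u v)
        (List.prefix_append t u) hle
    obtain ⟨q, hq⟩ := hu
    refine ⟨u, q, 0, hq.symm, ?_, by simp [pw]⟩
    rw [← hq, List.append_assoc] at h
    have := List.append_cancel_left h
    simpa using this.symm
  · push_neg at hle
    have htu : t <+: u :=
      List.prefix_of_prefix_length_le (List.prefix_append t u)
        (h ▸ List.prefix_append u v) hle.le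
    obtain ⟨u', hu'⟩ := htu
    have h' : t ++ u' = u' ++ v := by
      rw [← hu', List.append_assoc] at h
      exact List.append_cancel_left h
    have hdec : u'.length < u.length := by
      have := congrArg List.length hu'
      simp at this
      have := List.length_pos_iff.mpr ht
      omega
    obtain ⟨p, q, j, h1, h2, h3⟩ := conj_lemma t u' v ht h'
    refine ⟨p, q, j + 1, h1, h2, ?_⟩
    rw [← hu', h3, h1]
    simp [pw, List.append_assoc]
termination_by u.length

theorem prefix_pw (p r : List A) (m : ℕ) (h : p <+: pw r m) :
    ∃ a s s', r = s ++ s' ∧ p = pw r a ++ s := by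
  induction m generalizing p with
  | zero =>
    have : p = [] := List.prefix_nil.mp (by simpa [pw] using h)
    exact ⟨0, [], r, by simp, by simp [pw, this]⟩
  | succ n ih =>
    by_cases hle : p.length ≤ r.length
    · have hp : p <+: r :=
        List.prefix_of_prefix_length_le h (by simpa [pw] using List.prefix_append r (pw r n)) hle
      obtain ⟨s', hs'⟩ := hp
      exact ⟨0, p, s', hs'.symm, by simp [pw]⟩
    · push_neg at hle
      have hr : r <+: p :=
        List.prefix_of_prefix_length_le (by simpa [pw] using List.prefix_append r (pw r n)) h hle.le
      obtain ⟨p', hp'⟩ := hr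
      have hp'' : p' <+: pw r n := by
        rw [← hp'] at h
        simp only [pw] at h
        exact (List.prefix_append_right_inj r).mp h
      obtain ⟨a, s, s', hss, hps⟩ := ih p' hp''
      exact ⟨a + 1, s, s', hss, by rw [← hp', hps]; simp [pw, Nat.add_comm a 1, pw_add, List.append_assoc]⟩

theorem lyndon_schutzenberger (t u v : List A) (ht : t ≠ []) (hu : u ≠ []) (hv : v ≠ [])
    (htv : t ≠ v) (h : t ++ u = u ++ v) :
    ∃ (p q : List A) (m j : ℕ), Primitive (p ++ q) ∧ 0 < m ∧
      t = pw (p ++ q) m ∧ v = pw (q ++ p) m ∧ u = pw (p ++ q) j ++ p := by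
  obtain ⟨p, q, j, h1, h2, h3⟩ := conj_lemma t u v ht h
  have hpq : p ++ q ≠ [] := h1 ▸ ht
  obtain ⟨r, m, hr, hm, hrm⟩ := prim_root (p ++ q) hpq
  have hpfx : p <+: pw r m := hrm ▸ ⟨q, rfl⟩
  obtain ⟨a, s, s', hss, hps⟩ := prefix_pw p r m hpfx
  -- key: pw r m ++ p = p ++ v
  have key : pw r m ++ p = p ++ v := by
    rw [← hrm, h2, List.append_assoc]
  have key2 : pw r m ++ s = s ++ v := by
    rw [hps, ← List.append_assoc, ← pw_add, Nat.add_comm, pw_add, List.append_assoc,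
      List.append_assoc] at key
    exact List.append_cancel_left key
  have hv' : v = pw (s' ++ s) m := by
    have := pw_conj s s' m
    rw [← hss] at this
    rw [this] at key2
    exact (List.append_cancel_left key2).symm
  refine ⟨s, s', m, m * j + a, ?_, hm, ?_, hv', ?_⟩
  · rwa [← hss]
  · rw [h1, hrm, hss]
  · rw [h3, hrm, hps, ← hss, pw_mul, ← List.append_assoc, ← pw_add]
end

section
/- Let p and q be distinct primitive words with |p| = r|q| for some integer r ≥ 2. Then p q^m is primitive for all m ≥ r. -/
variable {A : Type*}

/-!
Suppose `p ++ q^m = v^n` with `n ≥ 2`. Then `|v| ≤ m|q|`, so `v` is a suffix of `q^m`, and `q^m`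
has the two periods `|q|` and `|v|`. If `|p| ≤ |v|`, then `p` is a factor of `q^m` and has period
`|q|`. Otherwise the length equation `n|v| = (r + m)|q|` leaves enough room for the Fine–Wilf
theorem: `q^m`, hence `q`, has period `gcd(|q|, |v|)`, which by primitivity of `q` is `|q|`; so
`|q| ∣ |v|`, and `v` and then `v^n` have period `|q|`. Either way `p` has period `|q|`, which
divides `|p| = r|q|`, so `p` is the `r`-th power of its prefix of length `|q|`.
-/

open List

section Powers

variable (v : List A)

@[simp]
lemma pw_zero : pw v 0 = [] := rfl

lemma pw_succ (n : ℕ) : pw v (n + 1) = v ++ pw v n := rfl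

@[simp]
lemma length_pw (n : ℕ) : (pw v n).length = n * v.length := by
  induction n with
  | zero => simp
  | succ n ih => rw [pw_succ, length_append, ih]; ring

lemma pw_succ' (n : ℕ) : pw v (n + 1) = pw v n ++ v := by
  induction n with
  | zero => simp [pw_succ]
  | succ n ih =>
    show v ++ pw v (n + 1) = v ++ pw v n ++ v
    rw [ih, append_assoc]

lemma getElem?_pw {n i : ℕ} (hi : i < n * v.length) : (pw v n)[i]? = v[i % v.length]? := by
  induction n generalizing i with
  | zero => simp at hi
  | succ n ih =>
    rw [pw_succ]
    rcases lt_or_ge i v.length with hiv | hiv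
    · rw [getElem?_append_left hiv, Nat.mod_eq_of_lt hiv]
    · rw [getElem?_append_right hiv, ih (by rw [add_mul] at hi; omega),
        ← Nat.mod_eq_sub_mod hiv]

lemma hasPeriod_pw (n : ℕ) : HasPeriod (pw v n) v.length := by
  cases n with
  | zero => simp
  | succ n =>
    rw [HasPeriod, pw_succ, take_left, prefix_append_right_inj, ← pw_succ, pw_succ']
    exact prefix_append _ _

end Powers

lemma List.HasPeriod.pw_of_dvd {v : List A} {g : ℕ} (h : HasPeriod v g) (hg : g ∣ v.length)
    (n : ℕ) : HasPeriod (pw v n) g := by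
  rw [hasPeriod_iff_forall_getElem?_mod] at h ⊢
  intro i hi
  rw [length_pw] at hi
  have hv : 0 < v.length := Nat.pos_of_mul_pos_left (Nat.zero_lt_of_lt hi)
  rw [getElem?_pw v hi, getElem?_pw v ((Nat.mod_le i g).trans_lt hi), h _ (Nat.mod_lt _ hv),
    h (i % g % v.length) (Nat.mod_lt _ hv), Nat.mod_mod_of_dvd _ hg, Nat.mod_mod_of_dvd _ hg,
    Nat.mod_mod]

lemma List.HasPeriod.eq_pw_take {x : List A} {g : ℕ} (h : HasPeriod x g) (hg : g ∣ x.length) :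
    x = pw (x.take g) (x.length / g) := by
  rcases eq_or_ne x [] with rfl | hx
  · simp
  have hx0 : 0 < x.length := length_pos_iff.2 hx
  have hg0 : 0 < g := Nat.pos_of_dvd_of_pos hg hx0
  have htake : (x.take g).length = g := length_take_of_le (Nat.le_of_dvd hx0 hg)
  have hlen : x.length / g * (x.take g).length = x.length := by rw [htake, Nat.div_mul_cancel hg]
  apply ext_getElem?
  intro i
  rcases lt_or_ge i x.length with hi | hi
  · rw [hasPeriod_iff_forall_getElem?_mod.1 h i hi, getElem?_pw _ (by rwa [hlen]), htake,
      getElem?_take_of_lt (Nat.mod_lt _ hg0)]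
  · rw [getElem?_eq_none hi, getElem?_eq_none (by rwa [length_pw, hlen])]

lemma Primitive.length_eq_of_hasPeriod {x : List A} (hx : Primitive x) {g : ℕ}
    (h : HasPeriod x g) (hg : 0 < g) (hgx : g ∣ x.length) : x.length = g := by
  have := hx.2 _ _ (h.eq_pw_take hgx)
  rw [Nat.div_eq_iff_eq_mul_left hg hgx] at this
  simpa using this

lemma Nat.add_le_mul_add_gcd_of_mul_eq {r m n d L : ℕ} (hr : 2 ≤ r) (hm : r ≤ m) (hn : 2 ≤ n)
    (h : n * d = (r + m) * L) (hd : d < r * L) : L + d ≤ m * L + L.gcd d := by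
  -- The contrary forces `r = m = 2`, `n = 3` and `3d = 4L`, where the bound holds with equality.
  by_contra! hlt
  have hL : 0 < L := by rcases L.eq_zero_or_pos with rfl | hL <;> simp_all
  obtain ⟨m, rfl⟩ : ∃ m', m = m' + 1 := ⟨m - 1, by omega⟩
  have hmL : m * L < d := by
    have := Nat.gcd_pos_of_pos_left d hL
    rw [add_one_mul] at hlt; omega
  obtain rfl : r = m + 1 := by
    have : m < r := Nat.lt_of_mul_lt_mul_right (hmL.trans hd)
    omega
  obtain rfl : n = 3 := by
    rcases (show n = 2 ∨ n = 3 ∨ 4 ≤ n by omega) with rfl | rfl | hn4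
    · nlinarith
    · rfl
    · nlinarith
  obtain rfl : m = 1 := by
    have : m < 2 := by nlinarith
    omega
  obtain ⟨c, rfl, rfl⟩ : ∃ c, L = 3 * c ∧ d = 4 * c := ⟨d - L, by omega, by omega⟩
  rw [Nat.gcd_mul_right] at hlt
  norm_num at hlt
  omega

lemma Primitive.length_dvd_of_hasPeriod_pw {q : List A} (hq : Primitive q) {m d : ℕ}
    (hm : 1 ≤ m) (hd : HasPeriod (pw q m) d)
    (hlen : q.length + d ≤ m * q.length + q.length.gcd d) : q.length ∣ d := by
  have hL : 0 < q.length := length_pos_iff.2 hq.1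
  have hgcd : HasPeriod (pw q m) (q.length.gcd d) :=
    (hasPeriod_pw q m).gcd hd (by simpa using Nat.sub_le_of_le_add (by linarith))
  have hq_prefix : q <+: pw q m := by
    obtain ⟨m, rfl⟩ := Nat.exists_eq_add_of_le' hm
    exact prefix_append _ _
  rw [← Nat.gcd_eq_left_iff_dvd]
  exact (hq.length_eq_of_hasPeriod (hgcd.infix hq_prefix.isInfix) (Nat.gcd_pos_of_pos_left d hL)
    (Nat.gcd_dvd_left _ _)).symm

lemma hasPeriod_of_append_pw_eq_pw {p q v : List A} (hq : Primitive q) {r m n : ℕ} (hr : 2 ≤ r)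
    (hm : r ≤ m) (hn : 2 ≤ n) (hlen : p.length = r * q.length) (hw : p ++ pw q m = pw v n) :
    HasPeriod p q.length := by
  have hwlen : n * v.length = (r + m) * q.length := by
    simpa [hlen, add_mul] using (congrArg length hw).symm
  have hv_suffix : v <:+ pw q m := by
    refine suffix_of_suffix_length_le ?_ (suffix_append p _) (by rw [length_pw]; nlinarith)
    obtain ⟨n, rfl⟩ := Nat.exists_eq_add_of_le' (by omega : 1 ≤ n)
    rw [hw, pw_succ']
    exact suffix_append _ _
  have hp_prefix : p <+: pw v n := hw ▸ prefix_append p _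
  by_cases hd : r * q.length ≤ v.length
  · have hpv : p <+: v := by
      refine prefix_of_prefix_length_le hp_prefix ?_ (by omega)
      obtain ⟨n, rfl⟩ := Nat.exists_eq_add_of_le' (by omega : 1 ≤ n)
      exact prefix_append _ _
    exact (hasPeriod_pw q m).infix (hpv.isInfix.trans hv_suffix.isInfix)
  · have hv_period : HasPeriod (pw q m) v.length :=
      (hasPeriod_pw v n).infix (hw ▸ (suffix_append p _).isInfix)
    have hdvd : q.length ∣ v.length := hq.length_dvd_of_hasPeriod_pw (by omega) hv_period
      (Nat.add_le_mul_add_gcd_of_mul_eq hr hm hn hwlen (not_le.1 hd))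
    exact (((hasPeriod_pw q m).infix hv_suffix.isInfix).pw_of_dvd hdvd n).infix hp_prefix.isInfix

theorem chu_shyr_yu_pq_pow_general (p q : List A) (hp : Primitive p) (hq : Primitive q)
    (r : ℕ) (hr : 2 ≤ r) (hlen : p.length = r * q.length)
    (m : ℕ) (hm : r ≤ m) :
    Primitive (p ++ pw q m) := by
  refine ⟨by simp [hp.1], fun v n hw => ?_⟩
  by_contra hn1
  have hn : 2 ≤ n := by
    rcases n with _ | _ | n
    · simp [hp.1] at hw
    · exact absurd rfl hn1
    · omega
  have hL : 0 < q.length := length_pos_iff.2 hq.1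
  have hpL := hp.length_eq_of_hasPeriod (hasPeriod_of_append_pw_eq_pw hq hr hm hn hlen hw) hL
    (by simp [hlen])
  rw [hlen] at hpL
  nlinarith

theorem chu_shyr_yu_pq_pow (p q : List A) (hp : Primitive p) (hq : Primitive q)
    (hpq : p ≠ q) (r : ℕ) (hr : 2 ≤ r) (hlen : p.length = r * q.length)
    (m : ℕ) (hm : r ≤ m) :
    Primitive (p ++ pw q m) :=
  chu_shyr_yu_pq_pow_general p q hp hq r hr hlen m hm
end

section
/- For every n ≥ 2 there is a constant C (one may take C = 2) such that for all positive integers l, ε₂(n,l) = Σ_{d ∈ Λ(l)} π_n(3l/d) ≤ C · n^{3l/4}, where Λ(l) = {d : d | l, 3 ∤ d, d ≥ 4} and π_n(k) counts primitive words of length k over an n-letter alphabet. -/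
/-!
Bounding each `π_n(3l/d)` by `n^(3l/d)`, the exponents `3l/d` are pairwise distinct (since
`d ↦ 3l/d` is an involution on the divisors of `3l`) and at most `3l/4` (since `d ≥ 4`). Hence the
sum is at most a sum of distinct powers `n^e` with `e ≤ 3l/4`, which is below `2 n^(3l/4)`.
-/

variable {A : Type*}

/-- Number of primitive words of length k over an n-letter alphabet. -/
noncomputable def piw (n k : ℕ) : ℕ :=
  Nat.card {w : List (Fin n) // w.length = k ∧ Primitive w}

open Finset

theorem piw_le_pow (n k : ℕ) : piw n k ≤ n ^ k := by
  let f := Subtype.impEmbedding (fun w : List (Fin n) => w.length = k ∧ Primitive w)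
    (fun w => w.length = k) fun _ h => h.1
  calc piw n k ≤ Nat.card (List.Vector (Fin n) k) := Nat.card_le_card_of_injective f f.injective
    _ = n ^ k := by simp

theorem Nat.sum_pow_le_two_mul_pow {m n : ℕ} {s : Finset ℕ} (hm : 2 ≤ m) (hs : ∀ k ∈ s, k ≤ n) :
    ∑ k ∈ s, m ^ k ≤ 2 * m ^ n :=
  calc ∑ k ∈ s, m ^ k ≤ ∑ k ∈ range (n + 1), m ^ k :=
        sum_le_sum_of_subset fun k hk => mem_range_succ_iff.mpr (hs k hk)
    _ = ∑ k ∈ range n, m ^ k + m ^ n := sum_range_succ _ _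
    _ ≤ 2 * m ^ n := by
        have := Nat.geomSum_lt hm (s := range n) fun k hk => mem_range.mp hk
        omega

theorem Nat.injOn_div_divisors {N : ℕ} (hN : N ≠ 0) : Set.InjOn (N / ·) N.divisors := by
  intro a ha b hb hab
  rw [← Nat.div_div_self (Nat.dvd_of_mem_divisors ha) hN,
    ← Nat.div_div_self (Nat.dvd_of_mem_divisors hb) hN]
  exact congrArg (N / ·) hab

theorem Nat.sum_pow_div_le_two_mul_pow {m N k : ℕ} {s : Finset ℕ} (hm : 2 ≤ m) (hN : N ≠ 0) (hk : 0 < k)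
    (hs : ∀ d ∈ s, d ∣ N ∧ k ≤ d) : ∑ d ∈ s, m ^ (N / d) ≤ 2 * m ^ (N / k) := by
  have hinj : Set.InjOn (N / ·) s := (Nat.injOn_div_divisors hN).mono fun d hd =>
    Nat.mem_divisors.mpr ⟨(hs d hd).1, hN⟩
  rw [← sum_image hinj]
  refine Nat.sum_pow_le_two_mul_pow hm fun e he => ?_
  obtain ⟨d, hd, rfl⟩ := mem_image.mp he
  exact Nat.div_le_div_left (hs d hd).2 hk

theorem Real.pow_div_le_rpow {x : ℝ} (hx : 1 ≤ x) (a b : ℕ) : x ^ (a / b) ≤ x ^ ((a : ℝ) / b) := by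
  rw [← Real.rpow_natCast]
  exact Real.rpow_le_rpow_of_exponent_le hx Nat.cast_div_le

theorem eps2S_bound (n : ℕ) (hn : 2 ≤ n) :
    ∃ C : ℝ, C = 2 ∧ ∀ l : ℕ, 0 < l →
      ((∑ d ∈ l.divisors.filter (fun d => 4 ≤ d ∧ ¬ 3 ∣ d), piw n (3 * l / d) : ℕ) : ℝ) ≤
        C * (n : ℝ) ^ ((3 * (l : ℝ)) / 4) := by
  refine ⟨2, rfl, fun l hl => ?_⟩
  have hsum : ∑ d ∈ l.divisors.filter (fun d => 4 ≤ d ∧ ¬ 3 ∣ d), piw n (3 * l / d)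
      ≤ 2 * n ^ (3 * l / 4) :=
    (sum_le_sum fun d _ => piw_le_pow n _).trans <|
      Nat.sum_pow_div_le_two_mul_pow hn (by positivity) (by norm_num) fun d hd => by
        simp only [mem_filter, Nat.mem_divisors] at hd
        exact ⟨hd.1.1.mul_left 3, hd.2.1⟩
  have hexp := Real.pow_div_le_rpow (x := n) (by exact_mod_cast (by omega : 1 ≤ n)) (3 * l) 4
  push_cast at hexp
  calc _ ≤ ((2 * n ^ (3 * l / 4) : ℕ) : ℝ) := by exact_mod_cast hsum
    _ ≤ 2 * (n : ℝ) ^ ((3 * (l : ℝ)) / 4) := by push_cast; gcongr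
end
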